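/- Let p be a prime, let M, M̃ ∈ M_n(ℤ) be expanding matrices and D, D̃ ⊂ ℤ^n finite digit sets, and let A, B ∈ M_n(ℤ) have determinants not divisible by p with AB ≡ I (mod p), M̃ = AMB and D = B D̃. If Z_{D̃}^n ⊆ E̊_p^n, then for every integer j ≥ 1, (M^t)^j Z(m_D) ⊆ (1/(det AB)^{j+1}) · A^t ((M̃^t)^j Z(m_{D̃}) + ℤ^n). -/

import Mathlib

/-!
With `c = det (A B)` and the integer matrix `N = c ^ j • adj B * M ^ j * adj A` one has
`B N A = c ^ (j + 1) • M ^ j`, so `c ^ (j + 1) • (Mᵀ) ^ j x = Aᵀ (Nᵀ w)` with `w = Bᵀ x`.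
Since `D = B D̃`, `w` is a zero of `m_{D̃}`; as `m_{D̃}` is `ℤⁿ`-periodic, reducing `w` modulo
`ℤⁿ` lands in `Z_{D̃}^n ⊆ E̊_pⁿ`, so `p w ∈ ℤⁿ`. Modulo `p`, `A` and `B` are mutually inverse, hence `N ≡ (A M B) ^ j = M̃ ^ j`,
and `Nᵀ w - (M̃ᵀ) ^ j w = ((N - M̃ ^ j) / p)ᵀ (p w) ∈ ℤⁿ`.
-/

open MeasureTheory Matrix Set Complex
open scoped Real Pointwise ENNReal

noncomputable section

namespace SA

variable {n : ℕ}

/-- Cast an integer matrix to a real matrix. -/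
def toR (M : Matrix (Fin n) (Fin n) ℤ) : Matrix (Fin n) (Fin n) ℝ :=
  M.map (Int.cast : ℤ → ℝ)

/-- Cast an integer vector to a real vector. -/
def vecR (d : Fin n → ℤ) : Fin n → ℝ := fun i => (d i : ℝ)

/-- A real matrix is expanding if all of its complex eigenvalues have modulus > 1. -/
def IsExpandingR (M : Matrix (Fin n) (Fin n) ℝ) : Prop :=
  ∀ z : ℂ, (M.map (Complex.ofReal)).charpoly.IsRoot z → 1 < ‖z‖

/-- An integer matrix is expanding if all of its complex eigenvalues have modulus > 1. -/
def IsExpanding (M : Matrix (Fin n) (Fin n) ℤ) : Prop :=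
  IsExpandingR (toR M)

/-- Standard inner product on `ℝ^n`. -/
def dotR (x y : Fin n → ℝ) : ℝ := ∑ i, x i * y i

/-- The exponential function `e_λ(x) = e^{2πi⟨λ,x⟩}`. -/
def expFun (lam : Fin n → ℝ) : (Fin n → ℝ) → ℂ :=
  fun x => Complex.exp (2 * Real.pi * Complex.I * (dotR lam x))

/-- Mask polynomial of a finite real digit set. -/
def maskR (D : Finset (Fin n → ℝ)) (x : Fin n → ℝ) : ℂ :=
  (D.card : ℂ)⁻¹ * ∑ d ∈ D, Complex.exp (2 * Real.pi * Complex.I * (dotR d x))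

/-- Zero set of the mask polynomial of a real digit set. -/
def maskZR (D : Finset (Fin n → ℝ)) : Set (Fin n → ℝ) := {x | maskR D x = 0}

/-- Mask polynomial of a finite integer digit set. -/
def mask (D : Finset (Fin n → ℤ)) (x : Fin n → ℝ) : ℂ :=
  (D.card : ℂ)⁻¹ * ∑ d ∈ D, Complex.exp (2 * Real.pi * Complex.I * (dotR (vecR d) x))

/-- Zero set `Z(m_D)` of the mask polynomial of an integer digit set. -/
def maskZ (D : Finset (Fin n → ℤ)) : Set (Fin n → ℝ) := {x | mask D x = 0}

/-- `Z_D^n := Z(m_D) ∩ [0,1)^n`. -/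
def ZDn (D : Finset (Fin n → ℤ)) : Set (Fin n → ℝ) :=
  maskZ D ∩ {x | ∀ i, 0 ≤ x i ∧ x i < 1}

/-- `E̊_p^n := (1/p){(l₁,…,l_n) : 0 ≤ lᵢ ≤ p-1} \ {0}`. -/
def Ering (p n : ℕ) : Set (Fin n → ℝ) :=
  {x | (∃ l : Fin n → ℕ, (∀ i, l i ≤ p - 1) ∧ ∀ i, x i = (l i : ℝ) / p) ∧ x ≠ 0}

/-- The integer lattice `ℤ^n` inside `ℝ^n`. -/
def latticeZ (n : ℕ) : Set (Fin n → ℝ) := {x | ∀ i, ∃ k : ℤ, x i = (k : ℝ)}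

/-- `μ` is the self-affine measure generated by the real expanding matrix `M`
and the real digit set `D`: it is a Borel probability measure satisfying
`μ = (1/|D|) ∑_{d∈D} μ ∘ φ_d⁻¹` with `φ_d(x) = M⁻¹(x+d)`. -/
def IsSelfAffineR (M : Matrix (Fin n) (Fin n) ℝ) (D : Finset (Fin n → ℝ))
    (μ : Measure (Fin n → ℝ)) : Prop :=
  IsProbabilityMeasure μ ∧
    μ = (D.card : ℝ≥0∞)⁻¹ • ∑ d ∈ D, μ.map (fun x => M⁻¹.mulVec (x + d))

/-- `μ` is the self-affine measure generated by the integer expanding matrix `M`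
and the integer digit set `D`. -/
def IsSelfAffine (M : Matrix (Fin n) (Fin n) ℤ) (D : Finset (Fin n → ℤ))
    (μ : Measure (Fin n → ℝ)) : Prop :=
  IsProbabilityMeasure μ ∧
    μ = (D.card : ℝ≥0∞)⁻¹ • ∑ d ∈ D, μ.map (fun x => (toR M)⁻¹.mulVec (x + vecR d))

/-- Fourier transform `μ̂(ξ) = ∫ e^{2πi⟨x,ξ⟩} dμ(x)`. -/
def FT (μ : Measure (Fin n → ℝ)) (ξ : Fin n → ℝ) : ℂ :=
  ∫ x, Complex.exp (2 * Real.pi * Complex.I * (dotR x ξ)) ∂μ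

/-- The family of exponentials `E(Λ)` is mutually orthogonal in `L²(μ)`:
`μ̂(λ - λ') = 0` for all distinct `λ, λ' ∈ Λ`. -/
def OrthExp (μ : Measure (Fin n → ℝ)) (Λ : Set (Fin n → ℝ)) : Prop :=
  ∀ a ∈ Λ, ∀ b ∈ Λ, a ≠ b → FT μ (a - b) = 0

/-- `Λ` is a spectrum of `μ`: the exponentials `{e^{2πi⟨λ,x⟩} : λ ∈ Λ}` form an
orthonormal (Hilbert) basis of `L²(μ)`. -/
def IsSpectrum (μ : Measure (Fin n → ℝ)) (Λ : Set (Fin n → ℝ)) : Prop :=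
  ∃ b : HilbertBasis Λ ℂ (Lp ℂ 2 μ), ∀ l : Λ, (b l : Lp ℂ 2 μ) =ᵐ[μ] expFun (l : Fin n → ℝ)

/-- `μ` is a spectral measure. -/
def IsSpectralMeasure (μ : Measure (Fin n → ℝ)) : Prop :=
  ∃ Λ : Set (Fin n → ℝ), Λ.Countable ∧ IsSpectrum μ Λ

/-- `(M, D)` is admissible: there is `S ⊂ ℤ^n` with `|S| = |D|` such that
`H = (1/√|S|)[e^{2πi⟨M⁻¹d,s⟩}]_{d∈D,s∈S}` satisfies `H^*H = I`. -/
def Admissible (M : Matrix (Fin n) (Fin n) ℤ) (D : Finset (Fin n → ℤ)) : Prop :=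
  ∃ S : Finset (Fin n → ℤ), S.card = D.card ∧
    letI H : Matrix {d // d ∈ D} {s // s ∈ S} ℂ := fun d s =>
      ((1 : ℂ) / (Real.sqrt S.card : ℂ)) *
        Complex.exp (2 * Real.pi * Complex.I *
          (dotR ((toR M)⁻¹.mulVec (vecR (d : Fin n → ℤ))) (vecR (s : Fin n → ℤ))))
    Hᴴ * H = 1

/-- Two matrices are congruent entrywise modulo `p`. -/
def ModEq (p : ℕ) (A B : Matrix (Fin n) (Fin n) ℤ) : Prop :=
  ∀ i j, (p : ℤ) ∣ (A i j - B i j)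

/-- `(M, D)` and `(M̃, D̃)` are conjugate in `GL_n(p)`: there are integer matrices
`A, B` with determinants prime to `p`, `AB ≡ I (mod p)`, `M̃ = AMB`, and either
`D = B D̃` or `D̃ = A D`. -/
def ConjugateGL (p : ℕ) (M Mt : Matrix (Fin n) (Fin n) ℤ)
    (D Dt : Finset (Fin n → ℤ)) : Prop :=
  ∃ A B : Matrix (Fin n) (Fin n) ℤ,
    ¬ (p : ℤ) ∣ A.det ∧ ¬ (p : ℤ) ∣ B.det ∧ ModEq p (A * B) 1 ∧ Mt = A * M * B ∧
      ((∀ d, d ∈ D ↔ ∃ dt ∈ Dt, d = B.mulVec dt) ∨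
       (∀ dt, dt ∈ Dt ↔ ∃ d ∈ D, dt = A.mulVec d))

section CommRing

variable {ι R : Type*} [Fintype ι] [DecidableEq ι] [CommRing R]

theorem mul_det_pow_smul_adjugate_mul (A B M : Matrix ι ι R) (j : ℕ) :
    B * ((A * B).det ^ j • (B.adjugate * M ^ j * A.adjugate)) * A =
      (A * B).det ^ (j + 1) • M ^ j := by
  rw [Matrix.mul_smul, Matrix.smul_mul,
    show B * (B.adjugate * M ^ j * A.adjugate) * A = B * B.adjugate * M ^ j * (A.adjugate * A) by
      noncomm_ring,
    mul_adjugate, adjugate_mul, Matrix.smul_mul, Matrix.mul_smul, one_mul, mul_one, smul_smul,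
    smul_smul, det_mul, pow_succ]
  ring_nf

theorem adjugate_mul_pow_mul_adjugate_of_mul_eq_one {A B : Matrix ι ι R} (h : A * B = 1)
    (M : Matrix ι ι R) (j : ℕ) : B.adjugate * M ^ j * A.adjugate = (A * M * B) ^ j := by
  have h' : B * A = 1 := mul_eq_one_comm.mp h
  have hB : B.adjugate = B.det • A := by
    rw [← mul_one B.adjugate, ← h', ← mul_assoc, adjugate_mul, Matrix.smul_mul, one_mul]
  have hA : A.adjugate = A.det • B := by
    rw [← one_mul A.adjugate, ← h', mul_assoc, mul_adjugate, Matrix.mul_smul, mul_one]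
  let u : (Matrix ι ι R)ˣ := ⟨A, B, h, h'⟩
  rw [show (A * M * B) ^ j = A * M ^ j * B from u.conj_pow M j, hA, hB, Matrix.smul_mul,
    Matrix.smul_mul, Matrix.mul_smul, smul_smul, ← det_mul, h', det_one, one_smul]

end CommRing

theorem vecR_mulVec (S : Matrix (Fin n) (Fin n) ℤ) (v : Fin n → ℤ) :
    vecR (S *ᵥ v) = toR S *ᵥ vecR v := by
  ext i
  simp [vecR, toR, mulVec, dotProduct]

theorem toR_transpose (X : Matrix (Fin n) (Fin n) ℤ) : toR Xᵀ = (toR X)ᵀ := rfl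

theorem toR_mul (X Y : Matrix (Fin n) (Fin n) ℤ) : toR (X * Y) = toR X * toR Y :=
  map_mul (Int.castRingHom ℝ).mapMatrix X Y

theorem toR_pow (X : Matrix (Fin n) (Fin n) ℤ) (j : ℕ) : toR (X ^ j) = toR X ^ j :=
  map_pow (Int.castRingHom ℝ).mapMatrix X j

theorem toR_mul_det_pow_smul_adjugate_mul (A B M : Matrix (Fin n) (Fin n) ℤ) (j : ℕ) :
    toR B * toR ((A * B).det ^ j • (B.adjugate * M ^ j * A.adjugate)) * toR A =
      (((A * B).det ^ (j + 1) : ℤ) : ℝ) • toR M ^ j := by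
  rw [← toR_mul, ← toR_mul, mul_det_pow_smul_adjugate_mul, ← toR_pow, Int.cast_smul_eq_zsmul]
  exact map_zsmul (Int.castRingHom ℝ).mapMatrix _ _

theorem modEq_iff_mapMatrix_eq {p : ℕ} {X Y : Matrix (Fin n) (Fin n) ℤ} :
    ModEq p X Y ↔
      (Int.castRingHom (ZMod p)).mapMatrix X = (Int.castRingHom (ZMod p)).mapMatrix Y := by
  simp only [ModEq, ← Matrix.ext_iff, RingHom.mapMatrix_apply, map_apply, eq_intCast,
    ZMod.intCast_eq_intCast_iff_dvd_sub, dvd_sub_comm]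

theorem modEq_det_pow_smul_adjugate_mul {p : ℕ} {A B : Matrix (Fin n) (Fin n) ℤ}
    (h : ModEq p (A * B) 1) (M : Matrix (Fin n) (Fin n) ℤ) (j : ℕ) :
    ModEq p ((A * B).det ^ j • (B.adjugate * M ^ j * A.adjugate)) ((A * M * B) ^ j) := by
  rw [modEq_iff_mapMatrix_eq, map_one] at h
  have hdet : ((A * B).det : ZMod p) = 1 := by
    rw [← eq_intCast (Int.castRingHom (ZMod p)), RingHom.map_det, h, det_one]
  rw [map_mul] at h
  rw [modEq_iff_mapMatrix_eq, map_zsmul, ← Int.cast_smul_eq_zsmul (ZMod p), Int.cast_pow, hdet,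
    one_pow, one_smul]
  simp only [map_mul, map_pow, RingHom.map_adjugate]
  exact adjugate_mul_pow_mul_adjugate_of_mul_eq_one h _ j

theorem ModEq.transpose {p : ℕ} {X Y : Matrix (Fin n) (Fin n) ℤ} (h : ModEq p X Y) :
    ModEq p Xᵀ Yᵀ :=
  fun i k => h k i

theorem ModEq.exists_mulVec_eq_add_vecR {p : ℕ} {X Y : Matrix (Fin n) (Fin n) ℤ}
    (hXY : ModEq p X Y) {w : Fin n → ℝ} {v : Fin n → ℤ} (hw : (p : ℝ) • w = vecR v) :
    ∃ u, toR X *ᵥ w = toR Y *ᵥ w + vecR u := by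
  set S := (X - Y).map (· / (p : ℤ))
  have hXS : toR X = toR Y + (p : ℝ) • toR S := by
    ext i k
    have := Int.mul_ediv_cancel' (hXY i k)
    simp only [toR, S, Matrix.add_apply, Matrix.smul_apply, map_apply, Matrix.sub_apply,
      smul_eq_mul]
    rw [← Int.cast_natCast, ← Int.cast_mul, this, Int.cast_sub]
    ring
  exact ⟨S *ᵥ v, by rw [hXS, add_mulVec, smul_mulVec, ← mulVec_smul, hw, vecR_mulVec]⟩

theorem dotR_vecR_mulVec (B : Matrix (Fin n) (Fin n) ℤ) (d : Fin n → ℤ) (x : Fin n → ℝ) :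
    dotR (vecR (B *ᵥ d)) x = dotR (vecR d) ((toR B)ᵀ *ᵥ x) := by
  change (vecR (B *ᵥ d)) ⬝ᵥ x = vecR d ⬝ᵥ ((toR B)ᵀ *ᵥ x)
  rw [dotProduct_mulVec, vecMul_transpose, vecR_mulVec]

theorem mask_image_mulVec {B : Matrix (Fin n) (Fin n) ℤ} (hB : B.det ≠ 0)
    (D : Finset (Fin n → ℤ)) (x : Fin n → ℝ) :
    mask (D.image B.mulVec) x = mask D ((toR B)ᵀ *ᵥ x) := by
  have hinj := mulVec_injective_of_det_ne_zero hB
  simp only [mask, Finset.card_image_of_injective D hinj,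
    Finset.sum_image fun a _ b _ h => hinj h, dotR_vecR_mulVec]

theorem mask_add_vecR (D : Finset (Fin n → ℤ)) (x : Fin n → ℝ) (m : Fin n → ℤ) :
    mask D (x + vecR m) = mask D x := by
  unfold mask
  congr 1
  refine Finset.sum_congr rfl fun d _ => ?_
  have hdot : dotR (vecR d) (x + vecR m) = dotR (vecR d) x + ((d ⬝ᵥ m : ℤ) : ℝ) := by
    change vecR d ⬝ᵥ (x + vecR m) = vecR d ⬝ᵥ x + _
    rw [dotProduct_add, ← eq_intCast (Int.castRingHom ℝ), RingHom.map_dotProduct]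
    rfl
  rw [hdot, ofReal_add, mul_add, exp_add, ofReal_intCast,
    show 2 * π * I * ((d ⬝ᵥ m : ℤ) : ℂ) = (d ⬝ᵥ m : ℤ) * (2 * π * I) by ring,
    exp_int_mul_two_pi_mul_I, mul_one]

theorem exists_smul_eq_vecR_of_mem_Ering {p : ℕ} {x : Fin n → ℝ} (hx : x ∈ Ering p n) :
    ∃ v : Fin n → ℤ, (p : ℝ) • x = vecR v := by
  obtain ⟨⟨l, -, hl⟩, -⟩ := hx
  rcases eq_or_ne p 0 with rfl | hp
  · exact ⟨0, by ext; simp [vecR]⟩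
  · refine ⟨fun i => l i, funext fun i => ?_⟩
    simp only [Pi.smul_apply, smul_eq_mul, hl i, vecR, Int.cast_natCast]
    field_simp

theorem exists_smul_eq_vecR_of_mem_maskZ {p : ℕ} {D : Finset (Fin n → ℤ)}
    (hZ : ZDn D ⊆ Ering p n) {w : Fin n → ℝ} (hw : w ∈ maskZ D) :
    ∃ v : Fin n → ℤ, (p : ℝ) • w = vecR v := by
  set m : Fin n → ℤ := fun i => ⌊w i⌋
  have hfract : w - vecR m ∈ ZDn D := by
    refine ⟨?_, fun i => ⟨Int.fract_nonneg (w i), Int.fract_lt_one (w i)⟩⟩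
    change mask D _ = 0
    rwa [← mask_add_vecR D _ m, sub_add_cancel]
  obtain ⟨u, hu⟩ := exists_smul_eq_vecR_of_mem_Ering (hZ hfract)
  refine ⟨u + (p : ℤ) • m, ?_⟩
  rw [← sub_add_cancel w (vecR m), smul_add, hu]
  ext i
  simp [vecR, m]

theorem maskZ_pow_subset_general {n : ℕ} {p : ℕ}
    (M Mt : Matrix (Fin n) (Fin n) ℤ)
    (D Dt : Finset (Fin n → ℤ)) (A B : Matrix (Fin n) (Fin n) ℤ)
    (hA : ¬ (p : ℤ) ∣ A.det) (hB : ¬ (p : ℤ) ∣ B.det)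
    (hAB : ModEq p (A * B) 1) (hMteq : Mt = A * M * B)
    (hDeq : ∀ d, d ∈ D ↔ ∃ dt ∈ Dt, d = B.mulVec dt)
    (hZ : ZDn Dt ⊆ Ering p n) (j : ℕ) :
    ∀ x ∈ maskZ D, ∃ y ∈ maskZ Dt, ∃ v : Fin n → ℤ,
      ((toR M)ᵀ ^ j).mulVec x =
        (((A * B).det ^ (j + 1) : ℤ) : ℝ)⁻¹ •
          (toR A)ᵀ.mulVec (((toR Mt)ᵀ ^ j).mulVec y + vecR v) := by
  intro x hx
  have hAdet : A.det ≠ 0 := fun h => hA (h ▸ dvd_zero _)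
  have hBdet : B.det ≠ 0 := fun h => hB (h ▸ dvd_zero _)
  have hD : D = Dt.image B.mulVec := by
    ext d
    simp [hDeq, eq_comm]
  set w := (toR B)ᵀ *ᵥ x
  have hw : w ∈ maskZ Dt := by
    simpa [maskZ, hD, mask_image_mulVec hBdet] using hx
  obtain ⟨v, hv⟩ := exists_smul_eq_vecR_of_mem_maskZ hZ hw
  set N := (A * B).det ^ j • (B.adjugate * M ^ j * A.adjugate)
  have hN : ModEq p N (Mt ^ j) := hMteq ▸ modEq_det_pow_smul_adjugate_mul hAB M j
  obtain ⟨u, hu⟩ := hN.transpose.exists_mulVec_eq_add_vecR hv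
  refine ⟨w, hw, u, ?_⟩
  have hc : (((A * B).det ^ (j + 1) : ℤ) : ℝ) ≠ 0 := by
    exact_mod_cast pow_ne_zero _ (det_mul A B ▸ mul_ne_zero hAdet hBdet)
  rw [eq_inv_smul_iff₀ hc]
  calc _ = (toR B * toR N * toR A)ᵀ *ᵥ x := by
        rw [toR_mul_det_pow_smul_adjugate_mul, transpose_smul, transpose_pow, smul_mulVec]
    _ = (toR A)ᵀ *ᵥ (toR Nᵀ *ᵥ w) := by
        rw [transpose_mul, transpose_mul, ← mulVec_mulVec, ← mulVec_mulVec, toR_transpose]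
    _ = _ := by rw [hu, toR_transpose, toR_pow, transpose_pow]

/-- `(M^t)^j Z(m_D) ⊆ (1/det(AB)^{j+1}) A^t ((M̃^t)^j Z(m_{D̃}) + ℤ^n)`. -/
theorem maskZ_pow_subset {n : ℕ} {p : ℕ} (hp : p.Prime)
    (M Mt : Matrix (Fin n) (Fin n) ℤ) (hM : IsExpanding M) (hMt : IsExpanding Mt)
    (D Dt : Finset (Fin n → ℤ)) (A B : Matrix (Fin n) (Fin n) ℤ)
    (hA : ¬ (p : ℤ) ∣ A.det) (hB : ¬ (p : ℤ) ∣ B.det)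
    (hAB : ModEq p (A * B) 1) (hMteq : Mt = A * M * B)
    (hDeq : ∀ d, d ∈ D ↔ ∃ dt ∈ Dt, d = B.mulVec dt)
    (hZ : ZDn Dt ⊆ Ering p n) (j : ℕ) (hj : 1 ≤ j) :
    ∀ x ∈ maskZ D, ∃ y ∈ maskZ Dt, ∃ v : Fin n → ℤ,
      ((toR M)ᵀ ^ j).mulVec x =
        (((A * B).det ^ (j + 1) : ℤ) : ℝ)⁻¹ •
          (toR A)ᵀ.mulVec (((toR Mt)ᵀ ^ j).mulVec y + vecR v) :=
  maskZ_pow_subset_general M Mt D Dt A B hA hB hAB hMteq hDeq hZ j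

end SA
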